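/- arXiv:1705.00474 — 2 statements merged into one kernel-verified Lean document; each statement's English description precedes it below -/
import Mathlib

section
/- Decrease of Gaussian total correlation under independent per-block noise: for every Hermitian positive definite block matrix N indexed by J and every block-diagonal Hermitian positive semidefinite Φ indexed by J, Σ_{i∈I} log det((N + Φ)_{ii}) − log det(N + Φ) ≤ Σ_{i∈I} log det(N_{ii}) − log det(N). -/
open Matrix BigOperators Finset ComplexOrder

noncomputable def logDet {p : Type*} [Fintype p] [DecidableEq p] (M : Matrix p p ℂ) : ℝ :=
  Real.log M.det.re

def blk {I : Type*} {n : I → ℕ} (M : Matrix (Σ i, Fin (n i)) (Σ i, Fin (n i)) ℂ) (i : I) :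
    Matrix (Fin (n i)) (Fin (n i)) ℂ :=
  M.submatrix (fun a => ⟨i, a⟩) (fun a => ⟨i, a⟩)

def IsBlockDiag {I : Type*} {n : I → ℕ}
    (M : Matrix (Σ i, Fin (n i)) (Σ i, Fin (n i)) ℂ) : Prop :=
  ∀ a b : Σ i, Fin (n i), a.1 ≠ b.1 → M a b = 0

/-!
It suffices to add the noise one block `j` at a time, since the other diagonal blocks do not
change. Order the coordinates as (block `j`, the rest) and write `M = [[A, B], [Bᴴ, D]]`, so that
`det M = det A · det (D - Bᴴ A⁻¹ B)`. Replacing `A` by `A + Ψ` decreases `A⁻¹` in the Loewner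
order, hence increases the Schur complement and its determinant:
`det (M + Ψ) / det (A + Ψ) ≥ det M / det A`, which is the claimed decrease of
`∑ᵢ log det Mᵢᵢ - log det M`.
-/

namespace Matrix

variable {𝕜 m n : Type*} [RCLike 𝕜] [Fintype m] [DecidableEq m] [Fintype n] [DecidableEq n]

lemma PosSemidef.one_le_det_one_add {Q : Matrix m m 𝕜} (hQ : Q.PosSemidef) :
    1 ≤ (1 + Q).det := by
  have hH : (1 + Q).IsHermitian := isHermitian_one.add hQ.1
  have hev : ∀ i, 1 ≤ hH.eigenvalues i := fun i => by
    set v := hH.eigenvectorBasis i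
    have hv : star ⇑v ⬝ᵥ ⇑v = 1 := by
      rw [dotProduct_comm, ← EuclideanSpace.inner_eq_star_dotProduct, inner_self_eq_norm_sq_to_K,
        hH.eigenvectorBasis.orthonormal.1 i]
      simp
    rw [hH.eigenvalues_eq, add_mulVec, one_mulVec, dotProduct_add, map_add, hv, RCLike.one_re]
    exact le_add_of_nonneg_right (hQ.re_dotProduct_nonneg _)
  rw [hH.det_eq_prod_eigenvalues, ← RCLike.ofReal_prod, ← RCLike.ofReal_one,
    RCLike.ofReal_le_ofReal]
  exact Finset.one_le_prod fun i _ => hev i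

open scoped MatrixOrder in
lemma PosSemidef.det_le_det_add {X P : Matrix m m 𝕜} (hX : X.PosSemidef) (hP : P.PosSemidef) :
    X.det ≤ (X + P).det := by
  by_cases hX0 : X.det = 0
  · exact hX0 ▸ (hX.add hP).det_nonneg
  have hXd : X.PosDef := hX.posDef_iff_det_ne_zero.mpr hX0
  obtain ⟨B, rfl⟩ := CStarAlgebra.nonneg_iff_eq_star_mul_self.mp hP.nonneg
  rw [det_add_mul _ _ (isUnit_iff_ne_zero.mpr hX0)]
  exact le_mul_of_one_le_right hX.det_nonneg
    (hXd.inv.posSemidef.mul_mul_conjTranspose_same B).one_le_det_one_add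

lemma PosDef.inv_sub_inv_posSemidef {A B : Matrix m m 𝕜} (hA : A.PosDef)
    (hAB : (B - A).PosSemidef) : (A⁻¹ - B⁻¹).PosSemidef := by
  have hB : B.PosDef := by simpa using hA.add_posSemidef hAB
  let := hA.isUnit.invertible
  let := hB.isUnit.invertible
  -- `B - A` and `A⁻¹ - B⁻¹` are the two Schur complements of the same block matrix.
  have hblocks : (fromBlocks B 1 1ᴴ A⁻¹).PosSemidef :=
    (PosDef.fromBlocks₂₂ B 1 hA.inv).mpr (by simpa using hAB)
  simpa using (PosDef.fromBlocks₁₁ 1 A⁻¹ hB).mp hblocks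

lemma PosDef.det_fromBlocks_mul_det_add_le {A Ψ : Matrix m m 𝕜} {B : Matrix m n 𝕜}
    {D : Matrix n n 𝕜} (hM : (fromBlocks A B Bᴴ D).PosDef) (hΨ : Ψ.PosSemidef) :
    (fromBlocks A B Bᴴ D).det * (A + Ψ).det ≤ (fromBlocks (A + Ψ) B Bᴴ D).det * A.det := by
  have hA : A.PosDef := hM.submatrix Sum.inl_injective
  have hAΨ : (A + Ψ).PosDef := hA.add_posSemidef hΨ
  let := hA.isUnit.invertible
  let := hAΨ.isUnit.invertible
  set S := D - Bᴴ * A⁻¹ * B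
  have hS : S.PosSemidef := (PosDef.fromBlocks₁₁ B D hA).mp hM.posSemidef
  have hgap : (Bᴴ * (A⁻¹ - (A + Ψ)⁻¹) * B).PosSemidef :=
    (hA.inv_sub_inv_posSemidef (by simpa using hΨ)).conjTranspose_mul_mul_same B
  have hS' : D - Bᴴ * (A + Ψ)⁻¹ * B = S + Bᴴ * (A⁻¹ - (A + Ψ)⁻¹) * B := by
    simp only [S, Matrix.mul_sub, Matrix.sub_mul]
    abel
  rw [det_fromBlocks₁₁, det_fromBlocks₁₁, invOf_eq_nonsing_inv, invOf_eq_nonsing_inv, hS']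
  calc A.det * S.det * (A + Ψ).det = (A.det * (A + Ψ).det) * S.det := by ring
    _ ≤ (A.det * (A + Ψ).det) * (S + Bᴴ * (A⁻¹ - (A + Ψ)⁻¹) * B).det :=
      mul_le_mul_of_nonneg_left (hS.det_le_det_add hgap)
        (mul_nonneg hA.det_pos.le hAΨ.det_pos.le)
    _ = (A + Ψ).det * (S + Bᴴ * (A⁻¹ - (A + Ψ)⁻¹) * B).det * A.det := by ring

variable {p : Type*} [Fintype p] [DecidableEq p]

lemma PosDef.re_det_pos {P : Matrix p p ℂ} (hP : P.PosDef) : 0 < P.det.re :=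
  (Complex.pos_iff.mp hP.det_pos).1

lemma PosDef.ofReal_re_det {P : Matrix p p ℂ} (hP : P.PosDef) : (P.det.re : ℂ) = P.det :=
  (Complex.eq_re_of_ofReal_le hP.det_pos.le).symm

end Matrix

lemma logDet_add_logDet_le {p q r s : Type*} [Fintype p] [DecidableEq p] [Fintype q]
    [DecidableEq q] [Fintype r] [DecidableEq r] [Fintype s] [DecidableEq s]
    {P : Matrix p p ℂ} {Q : Matrix q q ℂ} {R : Matrix r r ℂ} {S : Matrix s s ℂ}
    (hP : P.PosDef) (hQ : Q.PosDef) (hR : R.PosDef) (hS : S.PosDef)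
    (h : P.det * Q.det ≤ R.det * S.det) :
    logDet P + logDet Q ≤ logDet R + logDet S := by
  rw [← hP.ofReal_re_det, ← hQ.ofReal_re_det, ← hR.ofReal_re_det, ← hS.ofReal_re_det] at h
  unfold logDet
  rw [← Real.log_mul hP.re_det_pos.ne' hQ.re_det_pos.ne',
    ← Real.log_mul hR.re_det_pos.ne' hS.re_det_pos.ne']
  exact Real.log_le_log (mul_pos hP.re_det_pos hQ.re_det_pos) (mod_cast h)

section Blocks

variable {I : Type*} {n : I → ℕ}

lemma Matrix.PosDef.blk {M : Matrix (Σ i, Fin (n i)) (Σ i, Fin (n i)) ℂ} (hM : M.PosDef)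
    (i : I) : (blk M i).PosDef :=
  hM.submatrix (sigma_mk_injective (β := fun i => Fin (n i)) (i := i))

def SupportedOnBlock (Ψ : Matrix (Σ i, Fin (n i)) (Σ i, Fin (n i)) ℂ) (j : I) : Prop :=
  ∀ a b : Σ i, Fin (n i), a.1 ≠ j ∨ b.1 ≠ j → Ψ a b = 0

variable [DecidableEq I]

-- The first summand is `Fin (n j)` rather than the fiber `{a // a.1 = j}`, so that the top-left
-- block of `M.submatrix e e` is `blk M j` by definition.
def blockSumCompl (j : I) :
    Fin (n j) ⊕ {a : Σ i, Fin (n i) // a.1 ≠ j} ≃ Σ i, Fin (n i) :=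
  ((Equiv.sigmaSubtype j).symm.sumCongr (Equiv.refl _)).trans
    (Equiv.sumCompl fun a : Σ i, Fin (n i) => a.1 = j)

def blockIndicator (j : I) : Matrix (Σ i, Fin (n i)) (Σ i, Fin (n i)) ℂ :=
  diagonal fun a => if a.1 = j then 1 else 0

variable [Fintype I]

lemma blockIndicator_mul_mul_blockIndicator_apply (Φ : Matrix (Σ i, Fin (n i)) (Σ i, Fin (n i)) ℂ)
    (j : I) (a b : Σ i, Fin (n i)) :
    (blockIndicator j * Φ * blockIndicator j : Matrix _ _ ℂ) a b =
      if a.1 = j ∧ b.1 = j then Φ a b else 0 := by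
  simp only [blockIndicator, mul_diagonal, diagonal_mul]
  split_ifs <;> simp_all

lemma supportedOnBlock_blockIndicator_mul_mul_blockIndicator
    (Φ : Matrix (Σ i, Fin (n i)) (Σ i, Fin (n i)) ℂ) (j : I) :
    SupportedOnBlock (blockIndicator j * Φ * blockIndicator j) j := fun a b hab => by
  rw [blockIndicator_mul_mul_blockIndicator_apply, if_neg (not_and_or.mpr hab)]

lemma Matrix.PosSemidef.blockIndicator_mul_mul_blockIndicator
    {Φ : Matrix (Σ i, Fin (n i)) (Σ i, Fin (n i)) ℂ} (hΦ : Φ.PosSemidef) (j : I) :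
    (blockIndicator j * Φ * blockIndicator j).PosSemidef := by
  have hH : (blockIndicator (n := n) j)ᴴ = blockIndicator j := by
    simp [blockIndicator, diagonal_conjTranspose, apply_ite]
  simpa [hH] using hΦ.conjTranspose_mul_mul_same (blockIndicator j)

lemma IsBlockDiag.sum_blockIndicator_mul_mul_blockIndicator
    {Φ : Matrix (Σ i, Fin (n i)) (Σ i, Fin (n i)) ℂ} (hΦ : IsBlockDiag Φ) :
    ∑ j, blockIndicator j * Φ * blockIndicator j = Φ := by
  ext a b
  simp only [Matrix.sum_apply, blockIndicator_mul_mul_blockIndicator_apply]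
  by_cases hab : a.1 = b.1
  · simp [hab]
  · simp [hΦ a b hab]

noncomputable def totalCorrelation (M : Matrix (Σ i, Fin (n i)) (Σ i, Fin (n i)) ℂ) : ℝ :=
  (∑ i, logDet (blk M i)) - logDet M

lemma det_mul_det_blk_add_le {M Ψ : Matrix (Σ i, Fin (n i)) (Σ i, Fin (n i)) ℂ} (hM : M.PosDef)
    (hΨ : Ψ.PosSemidef) {j : I} (hΨj : SupportedOnBlock Ψ j) :
    M.det * (blk (M + Ψ) j).det ≤ (M + Ψ).det * (blk M j).det := by
  set e := blockSumCompl (n := n) j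
  set B := (M.submatrix e e).toBlocks₁₂
  set D := (M.submatrix e e).toBlocks₂₂
  have hM' : M.submatrix e e = fromBlocks (blk M j) B Bᴴ D := by
    ext (x | x) (y | y)
    · rfl
    · rfl
    · exact (hM.1.apply _ _).symm
    · rfl
  have hΨ' : Ψ.submatrix e e = fromBlocks (blk Ψ j) 0 0 0 := by
    ext (x | x) (y | y)
    · rfl
    · exact hΨj _ _ (.inr y.2)
    · exact hΨj _ _ (.inl x.2)
    · exact hΨj _ _ (.inl x.2)
  have hMpd : (fromBlocks (blk M j) B Bᴴ D).PosDef := hM' ▸ hM.submatrix e.injective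
  have hMΨ' : (M + Ψ).submatrix e e = M.submatrix e e + Ψ.submatrix e e := rfl
  rw [← det_submatrix_equiv_self e M, ← det_submatrix_equiv_self e (M + Ψ), hMΨ', hM', hΨ',
    fromBlocks_add, add_zero, add_zero, add_zero]
  exact hMpd.det_fromBlocks_mul_det_add_le (hΨ.submatrix _)

lemma totalCorrelation_add_le {M Ψ : Matrix (Σ i, Fin (n i)) (Σ i, Fin (n i)) ℂ} (hM : M.PosDef)
    (hΨ : Ψ.PosSemidef) {j : I} (hΨj : SupportedOnBlock Ψ j) :
    totalCorrelation (M + Ψ) ≤ totalCorrelation M := by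
  have hMΨ : (M + Ψ).PosDef := hM.add_posSemidef hΨ
  have hblk : ∀ i ∈ univ.erase j, logDet (blk (M + Ψ) i) = logDet (blk M i) := by
    intro i hi
    congr 1
    ext a b
    exact add_eq_left.mpr (hΨj _ _ (.inl (ne_of_mem_erase hi)))
  have hdet := logDet_add_logDet_le hM (hMΨ.blk j) hMΨ (hM.blk j) (det_mul_det_blk_add_le hM hΨ hΨj)
  unfold totalCorrelation
  rw [← add_sum_erase _ _ (mem_univ j), ← add_sum_erase _ _ (mem_univ j), sum_congr rfl hblk]
  linarith

lemma totalCorrelation_add_sum_le {N : Matrix (Σ i, Fin (n i)) (Σ i, Fin (n i)) ℂ}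
    (hN : N.PosDef) {Ψ : I → Matrix (Σ i, Fin (n i)) (Σ i, Fin (n i)) ℂ}
    (hΨ : ∀ j, (Ψ j).PosSemidef)
    (hΨj : ∀ j, SupportedOnBlock (Ψ j) j) (S : Finset I) :
    totalCorrelation (N + ∑ j ∈ S, Ψ j) ≤ totalCorrelation N := by
  induction S using Finset.induction_on with
  | empty => simp
  | insert j S hj ih =>
    rw [sum_insert hj, add_comm (Ψ j), ← add_assoc]
    have hNS : (N + ∑ j ∈ S, Ψ j).PosDef := hN.add_posSemidef (posSemidef_sum _ fun j _ => hΨ j)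
    exact (totalCorrelation_add_le hNS (hΨ j) (hΨj j)).trans ih

end Blocks

theorem total_correlation_decreases_under_blockdiag_noise
    {I : Type*} [Fintype I] [DecidableEq I] {n : I → ℕ}
    (N Φ : Matrix (Σ i, Fin (n i)) (Σ i, Fin (n i)) ℂ)
    (hN : N.PosDef) (hΦ : Φ.PosSemidef) (hΦbd : IsBlockDiag Φ) :
    (∑ i : I, logDet (blk (N + Φ) i)) - logDet (N + Φ)
      ≤ (∑ i : I, logDet (blk N i)) - logDet N := by
  have h := totalCorrelation_add_sum_le hN hΦ.blockIndicator_mul_mul_blockIndicator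
    (supportedOnBlock_blockIndicator_mul_mul_blockIndicator Φ) univ
  rwa [hΦbd.sum_blockIndicator_mul_mul_blockIndicator] at h
end

section
/- Feasibility is preserved under Loewner decrease of the per-user covariances: if the triple (R, Ω, 0) is feasible and R' = (R'_k)_{k∈K} is a family of Hermitian positive semidefinite matrices indexed by J with R_k − R'_k Hermitian positive semidefinite for every k ∈ K, then (R', Ω, 0) is feasible. In particular, the precoders obtained by rank reduction from a feasible solution of the relaxed problem satisfy the fronthaul capacity and per-RU power constraints. -/
open Matrix BigOperators Finset ComplexOrder

def psub {I : Type*} [DecidableEq I] {n : I → ℕ}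
    (M : Matrix (Σ i, Fin (n i)) (Σ i, Fin (n i)) ℂ) (S : Finset I) :
    Matrix {j : Σ i, Fin (n i) // j.1 ∈ S} {j : Σ i, Fin (n i) // j.1 ∈ S} ℂ :=
  M.submatrix Subtype.val Subtype.val

noncomputable def gS {I : Type*} [Fintype I] [DecidableEq I] {n : I → ℕ} (S : Finset I)
    (R Ω : Matrix (Σ i, Fin (n i)) (Σ i, Fin (n i)) ℂ) : ℝ :=
  (∑ i ∈ S, logDet (blk (R + Ω) i)) - logDet (psub Ω S)

def Feasible {I : Type*} [Fintype I] [DecidableEq I] {n : I → ℕ}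
    {K : Type*} [Fintype K] (C P : I → ℝ)
    (R : K → Matrix (Σ i, Fin (n i)) (Σ i, Fin (n i)) ℂ)
    (Ω Φ : Matrix (Σ i, Fin (n i)) (Σ i, Fin (n i)) ℂ) : Prop :=
  (∀ k, (R k).PosSemidef) ∧ Ω.PosDef ∧ Φ.PosSemidef ∧ IsBlockDiag Φ ∧
  (∀ S : Finset I, S.Nonempty → gS S (∑ k, R k) Ω ≤ ∑ i ∈ S, C i) ∧
  (∀ i : I, ((blk (∑ k, R k) i).trace).re + ((blk Ω i).trace).re + ((blk Φ i).trace).re ≤ P i)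

/-! Both constraints are monotone in the Loewner order of the aggregate covariance `∑ k, R k`,
while `log det Ω_S` does not involve it. The power constraint grows by the nonnegative trace of
the positive semidefinite increment. For the fronthaul constraint, write the increment as
`D = Bᴴ B`; for `A ≻ 0` the Weinstein–Aronszajn identity gives
`det (A + D) = det A · det (1 + B A⁻¹ Bᴴ) ≥ det A`, so every `log det ((R + Ω)_{ii})` grows. -/

namespace Matrix

variable {𝕜 : Type*} [RCLike 𝕜] {p : Type*} [Fintype p] [DecidableEq p]

lemma PosSemidef.one_le_det_one_add_s10 {E : Matrix p p 𝕜} (hE : E.PosSemidef) :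
    1 ≤ (1 + E).det := by
  set U := hE.1.eigenvectorUnitary
  have hU : (U : Matrix p p 𝕜) * star (U : Matrix p p 𝕜) = 1 := mem_unitaryGroup_iff.mp U.2
  conv_rhs => rw [hE.1.spectral_theorem, ← map_one (Unitary.conjStarAlgAut 𝕜 _ U), ← map_add,
    Unitary.conjStarAlgAut_apply, det_mul, det_mul, mul_right_comm, ← det_mul, hU, det_one,
    one_mul, ← diagonal_one, diagonal_add, det_diagonal]
  exact Finset.one_le_prod fun i _ => by simpa using hE.eigenvalues_nonneg i

open scoped MatrixOrder in
lemma PosDef.det_le_det_add {A D : Matrix p p 𝕜} (hA : A.PosDef) (hD : D.PosSemidef) :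
    A.det ≤ (A + D).det := by
  obtain ⟨B, rfl⟩ := CStarAlgebra.nonneg_iff_eq_star_mul_self.mp hD.nonneg
  have hE : (B * A⁻¹ * star B).PosSemidef := hA.inv.posSemidef.mul_mul_conjTranspose_same B
  have hAA : A * A⁻¹ = 1 := mul_nonsing_inv A ((isUnit_iff_isUnit_det A).mp hA.isUnit)
  calc A.det = A.det * 1 := (mul_one _).symm
    _ ≤ A.det * (1 + B * A⁻¹ * star B).det :=
        mul_le_mul_of_nonneg_left hE.one_le_det_one_add_s10 hA.det_pos.le
    _ = (A + star B * B).det := by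
        rw [Matrix.mul_assoc, det_one_add_mul_comm, ← det_mul, Matrix.mul_add, Matrix.mul_one,
          ← Matrix.mul_assoc, ← Matrix.mul_assoc, hAA, Matrix.one_mul]

end Matrix

lemma logDet_le_logDet_add {p : Type*} [Fintype p] [DecidableEq p] {A D : Matrix p p ℂ}
    (hA : A.PosDef) (hD : D.PosSemidef) : logDet A ≤ logDet (A + D) :=
  Real.log_le_log (Complex.pos_iff.mp hA.det_pos).1 (Complex.le_def.mp (hA.det_le_det_add hD)).1

section Blocks

variable {I : Type*} {n : I → ℕ}

lemma blk_add (M N : Matrix (Σ i, Fin (n i)) (Σ i, Fin (n i)) ℂ) (i : I) :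
    blk (M + N) i = blk M i + blk N i :=
  rfl

lemma gS_le_gS_add [Fintype I] [DecidableEq I] (S : Finset I)
    {R D Ω : Matrix (Σ i, Fin (n i)) (Σ i, Fin (n i)) ℂ}
    (hR : R.PosSemidef) (hD : D.PosSemidef) (hΩ : Ω.PosDef) :
    gS S R Ω ≤ gS S (R + D) Ω := by
  unfold gS
  gcongr with i
  rw [add_right_comm, blk_add]
  have hblk_posDef : (blk (R + Ω) i).PosDef :=
    (hΩ.posSemidef_add hR).submatrix (sigma_mk_injective (β := fun i => Fin (n i)))
  exact logDet_le_logDet_add hblk_posDef (hD.submatrix _)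

lemma re_trace_blk_le_add {R D : Matrix (Σ i, Fin (n i)) (Σ i, Fin (n i)) ℂ}
    (hD : D.PosSemidef) (i : I) : (blk R i).trace.re ≤ (blk (R + D) i).trace.re := by
  rw [blk_add, trace_add, Complex.add_re]
  exact le_add_of_nonneg_right (Complex.le_def.mp (hD.submatrix _).trace_nonneg).1

end Blocks

theorem feasibility_preserved_under_loewner_decrease_general
    {I : Type*} [Fintype I] [DecidableEq I] {n : I → ℕ}
    {K : Type*} [Fintype K]
    (C P : I → ℝ)
    (R R' : K → Matrix (Σ i, Fin (n i)) (Σ i, Fin (n i)) ℂ)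
    (Ω : Matrix (Σ i, Fin (n i)) (Σ i, Fin (n i)) ℂ)
    (hfeas : Feasible C P R Ω 0)
    (hR' : ∀ k, (R' k).PosSemidef)
    (hle : ∀ k, (R k - R' k).PosSemidef) :
    Feasible C P R' Ω 0 := by
  obtain ⟨-, hΩ, -, -, hgS, htr⟩ := hfeas
  have hR'sum : (∑ k, R' k).PosSemidef := posSemidef_sum _ fun k _ => hR' k
  have hdiff : (∑ k, R k - ∑ k, R' k).PosSemidef := by
    rw [← Finset.sum_sub_distrib]
    exact posSemidef_sum _ fun k _ => hle k
  have hsplit : ∑ k, R' k + (∑ k, R k - ∑ k, R' k) = ∑ k, R k := add_sub_cancel _ _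
  refine ⟨hR', hΩ, .zero, fun _ _ _ => rfl, fun S hS => ?_, fun i => ?_⟩
  · exact (gS_le_gS_add S hR'sum hdiff hΩ).trans (by rw [hsplit]; exact hgS S hS)
  · have htrace := re_trace_blk_le_add (R := ∑ k, R' k) hdiff i
    rw [hsplit] at htrace
    linarith [htr i]

theorem feasibility_preserved_under_loewner_decrease
    {I : Type*} [Fintype I] [DecidableEq I] {n : I → ℕ}
    {K : Type*} [Fintype K]
    (C P : I → ℝ) (hC : ∀ i, 0 ≤ C i) (hP : ∀ i, 0 ≤ P i)
    (R R' : K → Matrix (Σ i, Fin (n i)) (Σ i, Fin (n i)) ℂ)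
    (Ω : Matrix (Σ i, Fin (n i)) (Σ i, Fin (n i)) ℂ)
    (hfeas : Feasible C P R Ω 0)
    (hR' : ∀ k, (R' k).PosSemidef)
    (hle : ∀ k, (R k - R' k).PosSemidef) :
    Feasible C P R' Ω 0 :=
  feasibility_preserved_under_loewner_decrease_general C P R R' Ω hfeas hR' hle
end
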